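/- arXiv:0707.3179 — 5 statements merged into one kernel-verified Lean document; each statement's English description precedes it below -/
import Mathlib

section
/- For an elliptic curve with N_k = 1 + q^k − α₁^k − α₂^k where α₁+α₂ = 1+q−N₁ and α₁α₂ = q, one has 1 + q^k − N_k = L_{2k}(q, −N₁) for all k ≥ 1, where L_n(q,t) is the (q,t)-Lucas polynomial. -/
/-- The (q,t)-Lucas polynomial: sum over subsets `S ⊆ {1,…,n}` with no two elements
circularly consecutive mod `n`, weighted by `q^(# even elements of S) * t^(⌊n/2⌋ - #S)`. -/
def qtLucas {R : Type*} [CommRing R] (q t : R) (n : ℕ) : R :=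
  ∑ S ∈ (Finset.Icc 1 n).powerset.filter (fun S => ∀ x ∈ S, (x % n + 1) ∉ S),
    q ^ (S.filter (fun x => Even x)).card * t ^ (n / 2 - S.card)

/-!
Conditioning on whether the vertex `n + 2` is chosen splits the cyclic sum `L_{n+2}` into two
sums over independent sets of paths. Removing the top two vertices of a path gives a `2 × 2`
transfer matrix of trace `1 + q + t` and determinant `q`, so by Cayley–Hamilton both path sums,
hence `L_{2k}`, satisfy `u (k + 2) = (1 + q + t) u (k + 1) - q u k`. For `t = -N₁` this is the
recurrence of the power sums `α₁ ^ k + α₂ ^ k`, and the two sequences agree at `k = 1, 2`.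
-/

open Finset

section PathSums

variable {R : Type*} [CommRing R]

def pathIndep (a b : ℕ) : Finset (Finset ℕ) :=
  (Icc a b).powerset.filter fun S => ∀ x ∈ S, x + 1 ∉ S

/-- `qtLucas` for the path on `a, …, b`, with `K` in the role of `⌊n/2⌋`. -/
def pathLucas (q t : R) (a b K : ℕ) : R :=
  ∑ S ∈ pathIndep a b, q ^ #(S.filter fun x => Even x) * t ^ (K - #S)

theorem mem_pathIndep {a b : ℕ} {S : Finset ℕ} :
    S ∈ pathIndep a b ↔ S ⊆ Icc a b ∧ ∀ x ∈ S, x + 1 ∉ S := by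
  rw [pathIndep, mem_filter, mem_powerset]

/-- Halving `x - a` is injective on an independent set, since no two of its elements are
consecutive. -/
theorem card_le_of_mem_pathIndep {a b : ℕ} {S : Finset ℕ} (hS : S ∈ pathIndep a b) :
    #S ≤ (b + 2 - a) / 2 := by
  obtain ⟨hsub, hind⟩ := mem_pathIndep.1 hS
  have hmaps : ∀ x ∈ S, (x - a) / 2 ∈ range ((b + 2 - a) / 2) := fun x hx => by
    have := mem_Icc.1 (hsub hx)
    rw [mem_range]
    omega
  have hinj : Set.InjOn (fun x => (x - a) / 2) S := by
    intro x hx y hy hxy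
    have hx' := mem_Icc.1 (hsub hx)
    have hy' := mem_Icc.1 (hsub hy)
    have hxy1 : y ≠ x + 1 := fun h => hind x hx (h ▸ hy)
    have hyx1 : x ≠ y + 1 := fun h => hind y hy (h ▸ hx)
    simp only at hxy
    omega
  simpa using card_le_card_of_injOn _ hmaps hinj

theorem pathLucas_budget_succ (q t : R) {a b K : ℕ} (hK : (b + 2 - a) / 2 ≤ K) :
    pathLucas q t a b (K + 1) = t * pathLucas q t a b K := by
  rw [pathLucas, pathLucas, mul_sum]
  refine sum_congr rfl fun S hS => ?_
  have hcard := (card_le_of_mem_pathIndep hS).trans hK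
  rw [Nat.sub_add_comm hcard, pow_succ]
  ring

theorem pathLucas_of_lt (q t : R) {a b : ℕ} (K : ℕ) (h : b < a) :
    pathLucas q t a b K = t ^ K := by
  simp [pathLucas, pathIndep, Icc_eq_empty_of_lt h, filter_singleton]

theorem pow_card_filter_even_insert (q : R) {x : ℕ} {S : Finset ℕ} (hx : x ∉ S) :
    q ^ #((insert x S).filter fun x => Even x)
      = (if Even x then q else 1) * q ^ #(S.filter fun x => Even x) := by
  rw [filter_insert]
  split_ifs
  · rw [card_insert_of_notMem fun h => hx (mem_of_mem_filter x h), pow_succ, mul_comm]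
  · rw [one_mul]

theorem sum_filter_powerset_insert {M : Type*} [AddCommMonoid M] {b : ℕ} {A : Finset ℕ}
    (hb : b ∉ A) (P : Finset ℕ → Prop) [DecidablePred P] (f : Finset ℕ → M) :
    ∑ S ∈ (insert b A).powerset.filter P, f S
      = ∑ S ∈ A.powerset.filter P, f S
        + ∑ S ∈ A.powerset.filter (fun S => P (insert b S)), f (insert b S) := by
  rw [sum_filter, sum_filter, sum_filter, sum_powerset_insert hb]

theorem filter_insert_top_pathIndep (a b : ℕ) :
    (Icc a (b + 1)).powerset.filter
        (fun S => ∀ x ∈ insert (b + 2) S, x + 1 ∉ insert (b + 2) S)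
      = pathIndep a b := by
  ext S
  simp only [mem_filter, mem_powerset, mem_pathIndep, forall_mem_insert]
  simp only [mem_insert, subset_iff, mem_Icc, not_or]
  constructor
  · rintro ⟨hsub, -, hind⟩
    refine ⟨fun x hx => ?_, fun x hx => (hind x hx).2⟩
    have := (hind x hx).1
    have := hsub hx
    omega
  · rintro ⟨hsub, hind⟩
    refine ⟨fun x hx => ?_, ⟨by omega, fun h => ?_⟩, fun x hx => ⟨?_, hind x hx⟩⟩
    · have := hsub hx; omega
    · have := hsub h; omega
    · have := hsub hx; omega

theorem pathLucas_add_two (q t : R) {a b : ℕ} (K : ℕ) (h : a ≤ b + 2) :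
    pathLucas q t a (b + 2) (K + 1)
      = pathLucas q t a (b + 1) (K + 1) + (if Even b then q else 1) * pathLucas q t a b K := by
  have hIcc : Icc a (b + 2) = insert (b + 2) (Icc a (b + 1)) := by
    ext x; simp only [mem_Icc, mem_insert]; omega
  rw [pathLucas, pathIndep, hIcc, sum_filter_powerset_insert (by simp),
    filter_insert_top_pathIndep, pathLucas, pathLucas, mul_sum]
  congr 1
  refine sum_congr rfl fun S hS => ?_
  have hb : b + 2 ∉ S := fun hb => by
    have := mem_Icc.1 ((mem_pathIndep.1 hS).1 hb); omega
  have hparity : Even (b + 2) ↔ Even b := by simp [Nat.even_add]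
  rw [pow_card_filter_even_insert q hb, card_insert_of_notMem hb, Nat.add_sub_add_right]
  simp only [hparity]
  ring

theorem filter_insert_top_cyclic (n : ℕ) :
    (Icc 1 (n + 1)).powerset.filter
        (fun S : Finset ℕ => ∀ x ∈ insert (n + 2) S, x % (n + 2) + 1 ∉ insert (n + 2) S)
      = pathIndep 2 n := by
  ext S
  simp only [mem_filter, mem_powerset, mem_pathIndep, forall_mem_insert, Nat.mod_self,
    zero_add]
  simp only [mem_insert, subset_iff, mem_Icc, not_or]
  constructor
  · rintro ⟨hsub, ⟨-, h1⟩, hind⟩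
    have hmod : ∀ x ∈ S, x % (n + 2) = x := fun x hx =>
      Nat.mod_eq_of_lt (by have := hsub hx; omega)
    refine ⟨fun x hx => ?_, fun x hx => ?_⟩
    · have := hsub hx
      have := hmod x hx ▸ (hind x hx).1
      have : x ≠ 1 := fun h => h1 (h ▸ hx)
      omega
    · exact hmod x hx ▸ (hind x hx).2
  · rintro ⟨hsub, hind⟩
    have hmod : ∀ x ∈ S, x % (n + 2) = x := fun x hx =>
      Nat.mod_eq_of_lt (by have := hsub hx; omega)
    refine ⟨fun x hx => ?_, ⟨by omega, fun h => ?_⟩, fun x hx => ?_⟩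
    · have := hsub hx; omega
    · have := hsub h; omega
    · rw [hmod x hx]
      exact ⟨by have := hsub hx; omega, hind x hx⟩

/-- If the vertex `n + 2` is chosen, its neighbours `1` and `n + 1` are not. -/
theorem qtLucas_add_two (q t : R) (n : ℕ) :
    qtLucas q t (n + 2)
      = pathLucas q t 1 (n + 1) (n / 2 + 1)
        + (if Even n then q else 1) * pathLucas q t 2 n (n / 2) := by
  have hIcc : Icc 1 (n + 2) = insert (n + 2) (Icc 1 (n + 1)) := by
    ext x; simp only [mem_Icc, mem_insert]; omega
  have hfirst : (Icc 1 (n + 1)).powerset.filter (fun S => ∀ x ∈ S, x % (n + 2) + 1 ∉ S)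
      = pathIndep 1 (n + 1) :=
    filter_congr fun S hS => forall₂_congr fun x hx => by
      rw [Nat.mod_eq_of_lt (by have := mem_Icc.1 (mem_powerset.1 hS hx); omega)]
  rw [qtLucas, hIcc, sum_filter_powerset_insert (by simp), hfirst, filter_insert_top_cyclic,
    pathLucas, pathLucas, mul_sum, show (n + 2) / 2 = n / 2 + 1 by omega]
  congr 1
  refine sum_congr rfl fun S hS => ?_
  have hn : n + 2 ∉ S := fun hn => by
    have := mem_Icc.1 ((mem_pathIndep.1 hS).1 hn); omega
  have hparity : Even (n + 2) ↔ Even n := by simp [Nat.even_add]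
  rw [pow_card_filter_even_insert q hn, card_insert_of_notMem hn, Nat.add_sub_add_right]
  simp only [hparity]
  ring

end PathSums

section Recurrence

variable {R : Type*} [CommRing R]

/-- The recurrence `u (n + 2) = s * u (n + 1) - p * u n` of the power sums of the roots of
`X ^ 2 - s * X + p`. -/
def lucasRec (s p : R) : LinearRecurrence R := ⟨2, ![-p, s]⟩

theorem lucasRec_isSolution_iff {s p : R} {u : ℕ → R} :
    (lucasRec s p).IsSolution u ↔ ∀ n, u (n + 2) = s * u (n + 1) - p * u n := by
  refine forall_congr' fun n => ?_
  change u (n + 2) = ∑ i : Fin 2, ![-p, s] i * u (n + i) ↔ _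
  rw [Fin.sum_univ_two]
  simp only [Matrix.cons_val_zero, Matrix.cons_val_one, Fin.val_zero, Fin.val_one, add_zero]
  rw [neg_mul, neg_add_eq_sub]

theorem lucasRec_eq_of_isSolution {s p : R} {u v : ℕ → R} (hu : (lucasRec s p).IsSolution u)
    (hv : (lucasRec s p).IsSolution v) (h0 : u 0 = v 0) (h1 : u 1 = v 1) : u = v := by
  refine ((lucasRec s p).eq_iff_eqOn_range_order u v hu hv).2 fun n hn => ?_
  obtain rfl | rfl : n = 0 ∨ n = 1 := by simp [lucasRec] at hn; omega
  exacts [h0, h1]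

theorem lucasRec_isSolution_pow_add_pow (a b : R) :
    (lucasRec (a + b) (a * b)).IsSolution fun n => a ^ (n + 1) + b ^ (n + 1) :=
  lucasRec_isSolution_iff.2 fun n => by ring

/-- Cayley–Hamilton for the `2 × 2` transfer matrix `!![a, b; c, d]`. -/
theorem lucasRec_isSolution_of_transfer {u v : ℕ → R} {a b c d s p : R}
    (hu : ∀ n, u (n + 1) = a * u n + b * v n) (hv : ∀ n, v (n + 1) = c * u n + d * v n)
    (hs : a + d = s) (hp : a * d - b * c = p) : (lucasRec s p).IsSolution u :=
  lucasRec_isSolution_iff.2 fun n => by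
    rw [← hs, ← hp]
    linear_combination hu (n + 1) + b * hv n - d * hu n

end Recurrence

section Transfer

variable {R : Type*} [CommRing R] (q t : R)

theorem pathLucas_one_isSolution :
    (lucasRec (1 + q + t) q).IsSolution fun i => pathLucas q t 1 (2 * i + 1) (i + 1) := by
  have hodd : ∀ i, pathLucas q t 1 (2 * i + 3) (i + 2)
      = pathLucas q t 1 (2 * i + 1) (i + 1) + t * pathLucas q t 1 (2 * i + 2) (i + 1) :=
    fun i => by
      rw [pathLucas_add_two q t _ (by omega), pathLucas_budget_succ q t (by omega)]
      simp only [Nat.not_even_bit1, ↓reduceIte, one_mul]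
      ring
  have heven : ∀ i, pathLucas q t 1 (2 * i + 4) (i + 2)
      = pathLucas q t 1 (2 * i + 3) (i + 2) + q * pathLucas q t 1 (2 * i + 2) (i + 1) :=
    fun i => by
      rw [pathLucas_add_two q t _ (by omega)]
      simp [parity_simps]
  refine lucasRec_isSolution_of_transfer (v := fun i => pathLucas q t 1 (2 * i + 2) (i + 1))
    (a := 1) (b := t) (c := 1) (d := q + t) (fun i => ?_) (fun i => ?_) (by ring) (by ring)
  · linear_combination hodd i
  · linear_combination heven i + hodd i

theorem pathLucas_two_isSolution :
    (lucasRec (1 + q + t) q).IsSolution fun i => pathLucas q t 2 (2 * i) i := by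
  have heven : ∀ i, pathLucas q t 2 (2 * i + 2) (i + 1)
      = q * pathLucas q t 2 (2 * i) i + t * pathLucas q t 2 (2 * i + 1) i :=
    fun i => by
      rw [pathLucas_add_two q t _ (by omega), pathLucas_budget_succ q t (by omega)]
      simp only [even_two, Even.mul_right, ↓reduceIte]
      ring
  have hodd : ∀ i, pathLucas q t 2 (2 * i + 3) (i + 1)
      = pathLucas q t 2 (2 * i + 2) (i + 1) + pathLucas q t 2 (2 * i + 1) i :=
    fun i => by
      rw [pathLucas_add_two q t _ (by omega)]
      simp [parity_simps]
  refine lucasRec_isSolution_of_transfer (v := fun i => pathLucas q t 2 (2 * i + 1) i)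
    (a := q) (b := t) (c := q) (d := 1 + t) (fun i => ?_) (fun i => ?_) (by ring) (by ring)
  · linear_combination heven i
  · linear_combination hodd i + heven i

theorem qtLucas_two_mul_succ_isSolution :
    (lucasRec (1 + q + t) q).IsSolution fun i => qtLucas q t (2 * (i + 1)) := by
  have hsplit : ∀ i, qtLucas q t (2 * (i + 1))
      = pathLucas q t 1 (2 * i + 1) (i + 1) + q * pathLucas q t 2 (2 * i) i := fun i => by
    rw [mul_add, mul_one, qtLucas_add_two, Nat.mul_div_cancel_left _ two_pos,
      if_pos (even_two_mul i)]
  refine lucasRec_isSolution_iff.2 fun i => ?_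
  rw [hsplit, hsplit, hsplit]
  linear_combination lucasRec_isSolution_iff.1 (pathLucas_one_isSolution q t) i
    + q * lucasRec_isSolution_iff.1 (pathLucas_two_isSolution q t) i

end Transfer

section Initial

variable {R : Type*} [CommRing R] (q t : R)

theorem pathLucas_one_one : pathLucas q t 1 1 1 = 1 + t := by
  have h : pathIndep 1 1 = {∅, {1}} := by decide
  simp [pathLucas, h, filter_singleton]
  ring

theorem qtLucas_two : qtLucas q t 2 = 1 + q + t := by
  have h := qtLucas_add_two q t 0
  norm_num [pathLucas_one_one, pathLucas_of_lt] at h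
  rw [h]
  ring

theorem qtLucas_four : qtLucas q t 4 = (1 + q + t) ^ 2 - 2 * q := by
  have h := qtLucas_add_two q t 2
  have h1 := pathLucas_add_two q t 1 (a := 1) (b := 1) (by omega)
  have h2 := pathLucas_budget_succ q t (a := 1) (b := 2) (K := 1) (by omega)
  have h3 := pathLucas_add_two q t 0 (a := 1) (b := 0) (by omega)
  have h4 := pathLucas_add_two q t 0 (a := 2) (b := 0) (by omega)
  norm_num [pathLucas_one_one, pathLucas_of_lt] at h h1 h2 h3 h4
  rw [h, h1, h2, h3, h4]
  ring

end Initial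

theorem Nk_eq_qtLucas {R : Type*} [CommRing R] (q N₁ α₁ α₂ : R)
    (hs : α₁ + α₂ = 1 + q - N₁) (hp : α₁ * α₂ = q) (k : ℕ) (hk : 1 ≤ k) :
    1 + q ^ k - (1 + q ^ k - α₁ ^ k - α₂ ^ k) = qtLucas q (-N₁) (2 * k) := by
  obtain ⟨j, rfl⟩ := Nat.exists_eq_add_of_le' hk
  have hpow : (lucasRec (1 + q + -N₁) q).IsSolution fun n => α₁ ^ (n + 1) + α₂ ^ (n + 1) := by
    rw [← sub_eq_add_neg, ← hs, ← hp]
    exact lucasRec_isSolution_pow_add_pow α₁ α₂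
  have hsum := lucasRec_eq_of_isSolution hpow (qtLucas_two_mul_succ_isSolution q (-N₁))
    (by rw [qtLucas_two]; linear_combination hs)
    (by rw [qtLucas_four]; linear_combination (α₁ + α₂ + 1 + q - N₁) * hs - 2 * hp)
  calc 1 + q ^ (j + 1) - (1 + q ^ (j + 1) - α₁ ^ (j + 1) - α₂ ^ (j + 1))
      = α₁ ^ (j + 1) + α₂ ^ (j + 1) := by ring
    _ = qtLucas q (-N₁) (2 * (j + 1)) := congrFun hsum j
end

section
/- Define the (q,t)-Fibonacci polynomial F_k(q,t) = Σ_S q^{# even elements of S} t^{⌈k/2⌉ − #S}, summed over subsets S of {1,…,k−1} with no two consecutive elements. Then F_{2n+1}(q,t) = (1+q+t)·F_{2n−1}(q,t) − q·F_{2n−3}(q,t) for all n ≥ 2. -/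
/-!
Write `A m` for the sets `S ⊆ {1,…,m}` without two consecutive elements. Splitting on whether
`m + 2 ∈ S` gives `A (m+2) = A (m+1) ⊔ insert (m+2) '' A m`, and inserting `m + 2` costs a
factor `q` exactly when `m` is even. With the `t`-exponent `⌈k/2⌉ - #S` this yields
`F_{2m+4} = F_{2m+3} + F_{2m+2}` and `F_{2m+3} = t F_{2m+2} + q F_{2m+1}` (in the odd case
`⌈k/2⌉` grows by one, which a bound `#S ≤ ⌈m/2⌉` turns into a factor `t`). Eliminating the even
terms gives the recurrence.
-/

/-- The (q,t)-Fibonacci polynomial: sum over subsets `S ⊆ {1,…,k-1}` with no two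
consecutive elements, weighted by `q^(# even elements of S) * t^(⌈k/2⌉ - #S)`. -/
def qtFib {R : Type*} [CommRing R] (q t : R) (k : ℕ) : R :=
  ∑ S ∈ (Finset.Icc 1 (k - 1)).powerset.filter (fun S => ∀ x ∈ S, x + 1 ∉ S),
    q ^ (S.filter (fun x => Even x)).card * t ^ ((k + 1) / 2 - S.card)

open Finset

def sparseSubsets (m : ℕ) : Finset (Finset ℕ) :=
  (Icc 1 m).powerset.filter fun S => ∀ x ∈ S, x + 1 ∉ S

lemma mem_sparseSubsets {m : ℕ} {S : Finset ℕ} :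
    S ∈ sparseSubsets m ↔ (∀ x ∈ S, 1 ≤ x ∧ x ≤ m) ∧ ∀ x ∈ S, x + 1 ∉ S := by
  simp [sparseSubsets, subset_iff]

lemma notMem_of_mem_sparseSubsets {m x : ℕ} {S : Finset ℕ} (hS : S ∈ sparseSubsets m)
    (hx : m < x) : x ∉ S :=
  fun hxS => by have := (mem_sparseSubsets.mp hS).1 x hxS; omega

lemma card_le_of_mem_sparseSubsets {m : ℕ} {S : Finset ℕ} (hS : S ∈ sparseSubsets m) :
    #S ≤ (m + 1) / 2 := by
  obtain ⟨hrange, hsep⟩ := mem_sparseSubsets.mp hS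
  -- `x ↦ ⌈x/2⌉` is injective on a set without two consecutive elements.
  calc #S ≤ #(Icc 1 ((m + 1) / 2)) := by
        refine card_le_card_of_injOn (fun x => (x + 1) / 2) (fun x hx => ?_) fun x hx y hy hxy => ?_
        · have := hrange x hx
          simp only [coe_Icc, Set.mem_Icc]
          omega
        · have := hsep x hx
          have := hsep y hy
          simp only at hxy
          grind
    _ = (m + 1) / 2 := by simp

lemma sparseSubsets_add_two (m : ℕ) :
    sparseSubsets (m + 2) =
      sparseSubsets (m + 1) ∪ (sparseSubsets m).image (insert (m + 2)) := by
  ext S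
  simp only [mem_union, mem_image, mem_sparseSubsets]
  constructor
  · rintro ⟨hS, hsep⟩
    by_cases htop : m + 2 ∈ S
    · refine .inr ⟨S.erase (m + 2), ⟨fun x hx => ?_, fun x hx hx1 => ?_⟩, insert_erase htop⟩
      · have := hS x (mem_of_mem_erase hx)
        have := hsep x (mem_of_mem_erase hx)
        grind
      · exact hsep x (mem_of_mem_erase hx) (mem_of_mem_erase hx1)
    · exact .inl ⟨fun x hx => by grind, hsep⟩
  · rintro (⟨hS, hsep⟩ | ⟨S, ⟨hS, hsep⟩, rfl⟩)
    · exact ⟨fun x hx => by grind, hsep⟩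
    · grind

section qtSum

variable {R : Type*} [CommRing R] (q t : R)

/-- `qtFib q t (m + 1)` with the exponent `⌈(m+1)/2⌉` of `t` replaced by an arbitrary `e`. -/
def qtSum (m e : ℕ) : R :=
  ∑ S ∈ sparseSubsets m, q ^ #(S.filter Even) * t ^ (e - #S)

lemma qtFib_succ (m : ℕ) : qtFib q t (m + 1) = qtSum q t m ((m + 2) / 2) := rfl

lemma qtSum_add_two (m e : ℕ) :
    qtSum q t (m + 2) (e + 1) =
      qtSum q t (m + 1) (e + 1) + (if Even m then q else 1) * qtSum q t m e := by
  have hdisj : Disjoint (sparseSubsets (m + 1)) ((sparseSubsets m).image (insert (m + 2))) :=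
    disjoint_left.mpr fun S hS hS' => by
      obtain ⟨S', -, rfl⟩ := mem_image.mp hS'
      exact notMem_of_mem_sparseSubsets hS (by omega) (mem_insert_self _ _)
  have hinj : Set.InjOn (insert (m + 2)) (sparseSubsets m : Set (Finset ℕ)) :=
    fun S hS S' hS' h => by
      have hS : m + 2 ∉ S := notMem_of_mem_sparseSubsets hS (by omega)
      have hS' : m + 2 ∉ S' := notMem_of_mem_sparseSubsets hS' (by omega)
      rw [← erase_insert hS, ← erase_insert hS', h]
  rw [qtSum, sparseSubsets_add_two, sum_union hdisj, sum_image hinj, qtSum, qtSum, mul_sum]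
  congr 1
  refine sum_congr rfl fun S hS => ?_
  have htop : m + 2 ∉ S := notMem_of_mem_sparseSubsets hS (by omega)
  rw [card_insert_of_notMem htop, Nat.add_sub_add_right, filter_insert]
  by_cases hm : Even m
  · rw [if_pos (by simpa [Nat.even_add] using hm), if_pos hm,
      card_insert_of_notMem fun h => htop (mem_filter.mp h).1, pow_succ]
    ring
  · rw [if_neg (by simpa [Nat.even_add] using hm), if_neg hm, one_mul]

lemma qtSum_succ_right {m e : ℕ} (he : (m + 1) / 2 ≤ e) :
    qtSum q t m (e + 1) = t * qtSum q t m e := by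
  rw [qtSum, qtSum, mul_sum]
  refine sum_congr rfl fun S hS => ?_
  rw [Nat.sub_add_comm (by have := card_le_of_mem_sparseSubsets hS; omega), pow_succ]
  ring

lemma qtFib_two_mul_add_four (m : ℕ) :
    qtFib q t (2 * m + 4) = qtFib q t (2 * m + 3) + qtFib q t (2 * m + 2) := by
  have hodd : ¬Even (2 * m + 1) := by simp
  simpa [qtFib_succ, Nat.add_div_right, hodd, Nat.mul_add_div] using
    qtSum_add_two q t (2 * m + 1) (m + 1)

lemma qtFib_two_mul_add_three (m : ℕ) :
    qtFib q t (2 * m + 3) = t * qtFib q t (2 * m + 2) + q * qtFib q t (2 * m + 1) := by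
  have := qtSum_add_two q t (2 * m) (m + 1)
  rw [qtSum_succ_right q t (m := 2 * m + 1) (by omega), if_pos (even_two_mul m)] at this
  simpa [qtFib_succ, Nat.add_div_right, Nat.mul_add_div] using this

end qtSum

theorem qtFib_recurrence {R : Type*} [CommRing R] (q t : R) (n : ℕ) (hn : 2 ≤ n) :
    qtFib q t (2 * n + 1) =
      (1 + q + t) * qtFib q t (2 * n - 1) - q * qtFib q t (2 * n - 3) := by
  obtain ⟨m, rfl⟩ : ∃ m, n = m + 2 := ⟨n - 2, by omega⟩
  have h5 : qtFib q t (2 * m + 5) = t * qtFib q t (2 * m + 4) + q * qtFib q t (2 * m + 3) :=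
    qtFib_two_mul_add_three q t (m + 1)
  have h4 := qtFib_two_mul_add_four q t m
  have h3 := qtFib_two_mul_add_three q t m
  rw [show 2 * (m + 2) + 1 = 2 * m + 5 by ring, show 2 * (m + 2) - 1 = 2 * m + 3 by omega,
    show 2 * (m + 2) - 3 = 2 * m + 1 by omega]
  linear_combination h5 + t * h4 - h3
end

section
/- For all k ≥ 1, N_k = Σ_{i=1}^{k} (−1)^{i−1} P_{i,k}(q) N₁^i where each P_{i,k}(q) is a polynomial in q with nonnegative integer coefficients (in fact positive), where N_k = 1 + q^k − α₁^k − α₂^k with α₁+α₂ = 1+q−N₁ and α₁α₂ = q. -/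
/-!
Substituting `N₁ ↦ -N₁` turns the claim into: `T_k(N) := -N_k(-N)` has coefficients in `ℕ[q]`
and no constant term. With `U_k := T_{k+1} - T_k`, Newton's recurrence
`s_{k+2} = (1 + q + N) s_{k+1} - q s_k` for the power sums at `-N` becomes the subtraction-free
system `T_{k+1} = T_k + U_k`, `U_{k+1} = q U_k + (1 + q^{k+1}) N + N T_{k+1}`, `T_0 = 0`, `U_0 = N`.
So `T_k` can be defined over `ℕ[q][N]`, where nonnegativity is automatic, and the claim reduces
to transporting it back along `ℕ → ℤ` and `N ↦ -N`.
-/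

/-- Power sums `s k = α₁^k + α₂^k` of the roots of `X² - (1+q-N₁)X + q`, as elements of
`ℤ[q][N₁]` (outer variable is `N₁`, inner variable is `q`), via Newton's recurrence. -/
noncomputable def powerSumQN : ℕ → Polynomial (Polynomial ℤ)
  | 0 => 2
  | 1 => 1 + Polynomial.C Polynomial.X - Polynomial.X
  | k + 2 =>
      (1 + Polynomial.C Polynomial.X - Polynomial.X) * powerSumQN (k + 1)
        - Polynomial.C Polynomial.X * powerSumQN k

/-- `N_k = 1 + q^k - α₁^k - α₂^k ∈ ℤ[q][N₁]`. -/
noncomputable def NkQN (k : ℕ) : Polynomial (Polynomial ℤ) :=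
  1 + Polynomial.C (Polynomial.X ^ k) - powerSumQN k

open Polynomial Finset

theorem Polynomial.eq_sum_Icc_C_mul_X_pow {R : Type*} [Semiring R] {p : R[X]} {n : ℕ}
    (hdeg : p.natDegree ≤ n) (hzero : p.coeff 0 = 0) :
    p = ∑ i ∈ Icc 1 n, C (p.coeff i) * X ^ i := by
  conv_lhs => rw [p.as_sum_range_C_mul_X_pow' (Nat.lt_succ_of_le hdeg)]
  refine (sum_subset (fun i hi => ?_) fun i _ hi => ?_).symm
  · simp only [mem_Icc, mem_range] at hi ⊢; omega
  · obtain rfl : i = 0 := by simp_all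
    simp [hzero]

/-- The pair `(T_k, U_k)`, with `C X = q` and `X = N`. -/
noncomputable def twistedNkPair : ℕ → ℕ[X][X] × ℕ[X][X]
  | 0 => (0, X)
  | k + 1 =>
    let t := (twistedNkPair k).1 + (twistedNkPair k).2
    (t, C X * (twistedNkPair k).2 + C (1 + X ^ (k + 1)) * X + X * t)

noncomputable def twistedNk (k : ℕ) : ℕ[X][X] := (twistedNkPair k).1

noncomputable def twistedNkIncr (k : ℕ) : ℕ[X][X] := (twistedNkPair k).2

lemma twistedNk_zero : twistedNk 0 = 0 := rfl

lemma twistedNkIncr_zero : twistedNkIncr 0 = X := rfl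

lemma twistedNk_succ (k : ℕ) : twistedNk (k + 1) = twistedNk k + twistedNkIncr k := rfl

lemma twistedNkIncr_succ (k : ℕ) :
    twistedNkIncr (k + 1) =
      C X * twistedNkIncr k + C (1 + X ^ (k + 1)) * X + X * twistedNk (k + 1) := rfl

lemma natDegree_twistedNk_le (k : ℕ) :
    (twistedNk k).natDegree ≤ k ∧ (twistedNkIncr k).natDegree ≤ k + 1 := by
  induction k with
  | zero => exact ⟨by simp [twistedNk_zero], natDegree_X_le⟩
  | succ k ih =>
    have ht : (twistedNk (k + 1)).natDegree ≤ k + 1 := by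
      rw [twistedNk_succ]
      exact natDegree_add_le_of_degree_le (ih.1.trans k.le_succ) ih.2
    refine ⟨ht, ?_⟩
    rw [twistedNkIncr_succ]
    refine natDegree_add_le_of_degree_le (natDegree_add_le_of_degree_le ?_ ?_) ?_
    · exact (natDegree_C_mul_le _ _).trans (ih.2.trans (k + 1).le_succ)
    · exact (natDegree_C_mul_le _ _).trans (natDegree_X_le.trans (by omega))
    · exact natDegree_mul_le_of_le natDegree_X_le ht |>.trans (by omega)

lemma coeff_zero_twistedNk (k : ℕ) :
    (twistedNk k).coeff 0 = 0 ∧ (twistedNkIncr k).coeff 0 = 0 := by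
  induction k with
  | zero => simp [twistedNk_zero, twistedNkIncr_zero]
  | succ k ih =>
    have ht : (twistedNk (k + 1)).coeff 0 = 0 := by simp [twistedNk_succ, ih.1, ih.2]
    refine ⟨ht, ?_⟩
    simp [twistedNkIncr_succ, mul_coeff_zero, ih.2, ht]

noncomputable def untwist : ℕ[X][X] →+* ℤ[X][X] :=
  (compRingHom (-X)).comp (mapRingHom (mapRingHom (Nat.castRingHom ℤ)))

lemma untwist_X : untwist X = -X := by simp [untwist]

lemma untwist_C (a : ℕ[X]) : untwist (C a) = C (a.map (Nat.castRingHom ℤ)) := by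
  simp [untwist]

lemma untwist_twistedNk (k : ℕ) :
    untwist (twistedNk k) = powerSumQN k - 1 - C (X ^ k) ∧
      untwist (twistedNk (k + 1)) = powerSumQN (k + 1) - 1 - C (X ^ (k + 1)) := by
  induction k with
  | zero =>
    simp only [twistedNk_succ, twistedNk_zero, twistedNkIncr_zero, powerSumQN, map_zero, zero_add,
      untwist_X, pow_zero, pow_one, map_one]
    constructor <;> ring
  | succ k ih =>
    refine ⟨ih.2, ?_⟩
    have hincr : untwist (twistedNkIncr k) =
        untwist (twistedNk (k + 1)) - untwist (twistedNk k) := by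
      rw [twistedNk_succ, map_add]; ring
    rw [twistedNk_succ, twistedNkIncr_succ]
    simp only [map_add, map_mul, map_one, map_pow, hincr, untwist_C, untwist_X, ih.1, ih.2,
      map_X, powerSumQN]
    ring

lemma NkQN_eq_neg_untwist (k : ℕ) : NkQN k = -untwist (twistedNk k) := by
  rw [NkQN, (untwist_twistedNk k).1]; ring

theorem Nk_alternating_general (k : ℕ) :
    ∃ P : ℕ → Polynomial ℤ,
      (∀ i ∈ Finset.Icc 1 k, ∀ n : ℕ, 0 ≤ (P i).coeff n) ∧
      NkQN k = ∑ i ∈ Finset.Icc 1 k,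
        (-1 : Polynomial (Polynomial ℤ)) ^ (i - 1) * Polynomial.C (P i) * Polynomial.X ^ i := by
  refine ⟨fun i => ((twistedNk k).coeff i).map (Nat.castRingHom ℤ), fun i _ n => by simp, ?_⟩
  rw [NkQN_eq_neg_untwist]
  conv_lhs => rw [eq_sum_Icc_C_mul_X_pow (natDegree_twistedNk_le k).1 (coeff_zero_twistedNk k).1]
  rw [map_sum, ← sum_neg_distrib]
  refine sum_congr rfl fun i hi => ?_
  obtain ⟨j, rfl⟩ : ∃ j, i = j + 1 := ⟨i - 1, by grind⟩
  simp only [map_mul, map_pow, untwist_C, untwist_X, Nat.add_sub_cancel]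
  ring

theorem Nk_alternating (k : ℕ) (hk : 1 ≤ k) :
    ∃ P : ℕ → Polynomial ℤ,
      (∀ i ∈ Finset.Icc 1 k, ∀ n : ℕ, 0 ≤ (P i).coeff n) ∧
      NkQN k = ∑ i ∈ Finset.Icc 1 k,
        (-1 : Polynomial (Polynomial ℤ)) ^ (i - 1) * Polynomial.C (P i) * Polynomial.X ^ i :=
  Nk_alternating_general k
end

section
/- For k ≥ 1 and 1 ≤ i ≤ k, the number of subsets S of {1,…,2k−2} with exactly k−i−j odd elements and j even elements and no two consecutive elements is C(k−1−j, i−1)·C(i+j−1, j), i.e. the number of subsets of {1,…,2n} with a odd elements, b even elements, and no two consecutive elements equals C(n−b, a)·C(n−a, b). -/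
/-!
Let `N(k, a, b)` count the nonconsecutive subsets of `{1, …, k}` with `a` elements of the parity
of `k` and `b` of the other parity. Splitting according to whether `k` lies in the subset gives
`N(k, a + 1, b) = N(k - 1, b, a + 1) + N(k - 2, a, b)` and `N(k, 0, b) = N(k - 1, b, 0)`, the
swap coming from the change of parity from `k` to `k - 1`. By Pascal's rule,
`C(⌈k/2⌉ - b, a) * C(⌊k/2⌋ - a, b)` satisfies the same recursion and initial values; the theorem
is the case `k = 2n`.
-/

open Finset

def nonconsecutiveSubsets (k : ℕ) : Finset (Finset ℕ) :=
  {S ∈ (Icc 1 k).powerset | ∀ x ∈ S, x + 1 ∉ S}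

lemma mem_nonconsecutiveSubsets {k : ℕ} {S : Finset ℕ} :
    S ∈ nonconsecutiveSubsets k ↔ S ⊆ Icc 1 k ∧ ∀ x ∈ S, x + 1 ∉ S := by
  rw [nonconsecutiveSubsets, mem_filter, mem_powerset]

lemma notMem_of_mem_nonconsecutiveSubsets {k x : ℕ} {S : Finset ℕ}
    (hS : S ∈ nonconsecutiveSubsets k) (hx : k < x) : x ∉ S := fun h => by
  have := (mem_nonconsecutiveSubsets.1 hS).1 h
  rw [mem_Icc] at this
  omega

lemma nonconsecutiveSubsets_add_two (k : ℕ) :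
    nonconsecutiveSubsets (k + 2) =
      nonconsecutiveSubsets (k + 1) ∪ (nonconsecutiveSubsets k).image (insert (k + 2)) := by
  ext S
  simp only [mem_union, mem_image, mem_nonconsecutiveSubsets, subset_iff, mem_Icc]
  constructor
  · rintro ⟨hsub, hS⟩
    by_cases htop : k + 2 ∈ S
    · refine Or.inr ⟨S.erase (k + 2), ⟨fun x hx => ?_, fun x hx hx1 => ?_⟩, insert_erase htop⟩
      · rw [mem_erase] at hx
        have : x ≠ k + 1 := by rintro rfl; exact hS _ hx.2 htop
        have := hsub hx.2
        omega
      · exact hS x (mem_of_mem_erase hx) (mem_of_mem_erase hx1)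
    · refine Or.inl ⟨fun x hx => ?_, hS⟩
      have : x ≠ k + 2 := by rintro rfl; exact htop hx
      have := hsub hx
      omega
  · rintro (⟨hsub, hS⟩ | ⟨T, ⟨hsub, hT⟩, rfl⟩)
    · exact ⟨fun x hx => by have := hsub hx; omega, hS⟩
    · refine ⟨fun x hx => ?_, fun x hx hx1 => ?_⟩
      · rcases mem_insert.1 hx with rfl | hx
        · omega
        · have := hsub hx; omega
      · rcases mem_insert.1 hx with rfl | hx <;> rcases mem_insert.1 hx1 with h | h
        · omega
        · have := hsub h; omega
        · have := hsub hx; omega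
        · exact hT x hx h

lemma card_filter_nonconsecutiveSubsets_add_two (k : ℕ) (P : Finset ℕ → Prop) [DecidablePred P] :
    #{S ∈ nonconsecutiveSubsets (k + 2) | P S} =
      #{S ∈ nonconsecutiveSubsets (k + 1) | P S} +
        #{T ∈ nonconsecutiveSubsets k | P (insert (k + 2) T)} := by
  rw [nonconsecutiveSubsets_add_two, filter_union, card_union_of_disjoint, filter_image,
    card_image_of_injOn]
  · intro T₁ h₁ T₂ h₂ h
    have h₁ := notMem_of_mem_nonconsecutiveSubsets (mem_filter.1 h₁).1 (by omega : k < k + 2)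
    have h₂ := notMem_of_mem_nonconsecutiveSubsets (mem_filter.1 h₂).1 (by omega : k < k + 2)
    rw [← erase_insert h₁, h, erase_insert h₂]
  · refine disjoint_left.2 fun S hS hS' => ?_
    obtain ⟨T, -, rfl⟩ := mem_image.1 (mem_filter.1 hS').1
    exact notMem_of_mem_nonconsecutiveSubsets (mem_filter.1 hS).1 (by omega) (mem_insert_self _ _)

def nonconsecutiveCount (k a b : ℕ) : ℕ :=
  #{S ∈ nonconsecutiveSubsets k | #{x ∈ S | Even (x + k)} = a ∧ #{x ∈ S | ¬Even (x + k)} = b}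

lemma card_filter_parity_insert_add_two {k : ℕ} {T : Finset ℕ} (hT : k + 2 ∉ T) :
    #{x ∈ insert (k + 2) T | Even (x + (k + 2))} = #{x ∈ T | Even (x + k)} + 1 ∧
      #{x ∈ insert (k + 2) T | ¬Even (x + (k + 2))} = #{x ∈ T | ¬Even (x + k)} := by
  have hk : Even (k + 2 + (k + 2)) := ⟨k + 2, rfl⟩
  rw [filter_insert, if_pos hk, filter_insert, if_neg (not_not.2 hk),
    card_insert_of_notMem (fun h => hT (mem_filter.1 h).1)]
  simp [← add_assoc, Nat.even_add_one]

lemma nonconsecutiveCount_add_two_zero (k b : ℕ) :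
    nonconsecutiveCount (k + 2) 0 b = nonconsecutiveCount (k + 1) b 0 := by
  rw [nonconsecutiveCount, card_filter_nonconsecutiveSubsets_add_two, nonconsecutiveCount,
    card_eq_zero.2 (filter_false_of_mem (s := nonconsecutiveSubsets k) fun T hT => ?_), add_zero]
  · simp only [← add_assoc, Nat.even_add_one, not_not, and_comm]
  · rw [(card_filter_parity_insert_add_two (k := k)
      (notMem_of_mem_nonconsecutiveSubsets hT (by omega))).1]
    simp

lemma nonconsecutiveCount_add_two_succ (k a b : ℕ) :
    nonconsecutiveCount (k + 2) (a + 1) b =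
      nonconsecutiveCount (k + 1) b (a + 1) + nonconsecutiveCount k a b := by
  rw [nonconsecutiveCount, card_filter_nonconsecutiveSubsets_add_two, nonconsecutiveCount,
    nonconsecutiveCount]
  congr 1
  · simp only [← add_assoc, Nat.even_add_one, not_not, and_comm]
  · refine congrArg card (filter_congr fun T hT => ?_)
    have h := card_filter_parity_insert_add_two (k := k)
      (notMem_of_mem_nonconsecutiveSubsets hT (by omega))
    rw [h.1, h.2, add_left_inj]

theorem nonconsecutiveCount_eq_choose_mul_choose (k a b : ℕ) :
    nonconsecutiveCount k a b = ((k + 1) / 2 - b).choose a * (k / 2 - a).choose b := by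
  induction k using Nat.twoStepInduction generalizing a b with
  | zero =>
    rw [nonconsecutiveCount, show nonconsecutiveSubsets 0 = {∅} by decide]
    rcases a with _ | a <;> rcases b with _ | b <;> simp [filter_singleton]
  | one =>
    rw [nonconsecutiveCount, show nonconsecutiveSubsets 1 = {∅, {1}} by decide]
    rcases a with _ | _ | a <;> rcases b with _ | b <;>
      simp [filter_insert, filter_singleton, Nat.odd_iff, Nat.choose_eq_zero_of_lt]
  | more k ih₀ ih₁ =>
    have hhalf : (k + 2) / 2 = k / 2 + 1 := by omega
    cases a with
    | zero => simp [nonconsecutiveCount_add_two_zero, ih₁, hhalf]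
    | succ a =>
      rw [nonconsecutiveCount_add_two_succ, ih₀, ih₁,
        show (k + 2 + 1) / 2 = (k + 1) / 2 + 1 by omega, hhalf, Nat.add_sub_add_right]
      by_cases hb : b ≤ (k + 1) / 2
      · rw [Nat.succ_sub hb, Nat.choose_succ_succ']
        ring
      · rw [Nat.choose_eq_zero_of_lt (by omega : k / 2 - a < b)]
        simp

theorem count_nonconsecutive_subsets_general (n : ℕ) (a b : ℕ) :
    ((Finset.Icc 1 (2 * n)).powerset.filter (fun S =>
        (∀ x ∈ S, x + 1 ∉ S) ∧
        (S.filter (fun x => ¬ Even x)).card = a ∧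
        (S.filter (fun x => Even x)).card = b)).card =
      Nat.choose (n - b) a * Nat.choose (n - a) b := by
  have h := nonconsecutiveCount_eq_choose_mul_choose (2 * n) b a
  rw [show (2 * n + 1) / 2 = n by omega, show 2 * n / 2 = n by omega,
    mul_comm ((n - a).choose b)] at h
  have hparity (x : ℕ) : Even (x + 2 * n) ↔ Even x := by simp [Nat.even_add]
  rw [← h, nonconsecutiveCount, nonconsecutiveSubsets, filter_filter]
  simp only [hparity, and_comm]

theorem count_nonconsecutive_subsets (n : ℕ) (hn : 1 ≤ n) (a b : ℕ) :
    ((Finset.Icc 1 (2 * n)).powerset.filter (fun S =>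
        (∀ x ∈ S, x + 1 ∉ S) ∧
        (S.filter (fun x => ¬ Even x)).card = a ∧
        (S.filter (fun x => Even x)).card = b)).card =
      Nat.choose (n - b) a * Nat.choose (n - a) b :=
  count_nonconsecutive_subsets_general n a b
end

section
/- For 1 ≤ i ≤ k and 0 ≤ j ≤ i, let c denote the number of subsets S of {1,…,2k} with exactly k−i−j odd elements, exactly j even elements, and no two circularly consecutive elements (mod 2k). Then i·c = k·d, where d is the number of subsets of {1,…,2k−2} with k−i−j odd elements, j even elements, and no two (linearly) consecutive elements. -/
/-!
Each block `{2m+1, 2m+2}` of `{1, …, 2k}` holds at most one element of a set `S` with no two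
circularly consecutive elements, so `S` misses exactly `k - |S|` blocks, which is `i` when `S` has
`k-i-j` odd and `j` even elements. Count the pairs `(S, x)` with `{x, x+1}` a block missed by `S`.
For a fixed block, rotating `{1, …, 2k}` by the even amount `2k - 1 - x` moves it to
`{2k-1, 2k}` and preserves parities and circular adjacency; the sets missing `{2k-1, 2k}` are
exactly the sets on `{1, …, 2k-2}` with no two linearly consecutive elements. So both counts of
the pairs are `i·c` and `k·d`.
-/

open Finset

def cycShift (n c p : ℕ) : ℕ := (p - 1 + c) % n + 1

section cycShift

variable {n c d p : ℕ}

lemma one_le_cycShift : 1 ≤ cycShift n c p := Nat.le_add_left 1 _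

lemma cycShift_mem_Icc (hn : 0 < n) : cycShift n c p ∈ Icc 1 n := by
  have := Nat.mod_lt (p - 1 + c) hn
  simp only [cycShift, mem_Icc]
  omega

lemma cycShift_of_add_le (hp : 1 ≤ p) (h : p + c ≤ n) : cycShift n c p = p + c := by
  rw [cycShift, Nat.mod_eq_of_lt (by omega)]
  omega

lemma cycShift_one (hp : 1 ≤ p) : cycShift n 1 p = p % n + 1 := by
  rw [cycShift, Nat.sub_add_cancel hp]

lemma cycShift_cycShift : cycShift n c (cycShift n d p) = cycShift n (d + c) p := by
  simp only [cycShift, Nat.add_sub_cancel, Nat.mod_add_mod, add_assoc]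

lemma cycShift_cycShift_of_add_eq (hcd : c + d = n) (hp : p ∈ Icc 1 n) :
    cycShift n d (cycShift n c p) = p := by
  rw [mem_Icc] at hp
  rw [cycShift_cycShift, cycShift, hcd, Nat.add_mod_right, Nat.mod_eq_of_lt (by omega)]
  omega

lemma even_cycShift_iff (hn : Even n) (hc : Even c) (hp : 1 ≤ p) :
    Even (cycShift n c p) ↔ Even p := by
  have := Nat.mod_mod_of_dvd (p - 1 + c) (even_iff_two_dvd.mp hn)
  rw [Nat.even_iff] at hc ⊢
  rw [Nat.even_iff, cycShift]
  omega

lemma cycShift_mem_image_cycShift_iff {S : Finset ℕ} (hcd : c + d = n) (hS : S ⊆ Icc 1 n)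
    (hp : p ∈ Icc 1 n) : cycShift n c p ∈ S.image (cycShift n c) ↔ p ∈ S := by
  refine ⟨fun h => ?_, mem_image_of_mem _⟩
  obtain ⟨q, hq, hqp⟩ := mem_image.mp h
  rwa [← cycShift_cycShift_of_add_eq hcd hp, ← hqp, cycShift_cycShift_of_add_eq hcd (hS hq)]

end cycShift

lemma card_filter_image_of_injOn {α β : Type*} [DecidableEq β] {S : Finset α} {f : α → β}
    {P : β → Prop} [DecidablePred P] (hf : Set.InjOn f S) :
    #{q ∈ S.image f | P q} = #{p ∈ S | P (f p)} := by
  rw [filter_image, card_image_of_injOn (hf.mono (filter_subset _ _))]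

section rotation

variable {n c d : ℕ} {S : Finset ℕ}

lemma injOn_cycShift (hcd : c + d = n) : Set.InjOn (cycShift n c) (Icc 1 n) :=
  Set.LeftInvOn.injOn (f₁' := cycShift n d) fun _ hp => cycShift_cycShift_of_add_eq hcd hp

lemma image_image_cycShift_of_add_eq (hcd : c + d = n) (hS : S ⊆ Icc 1 n) :
    (S.image (cycShift n c)).image (cycShift n d) = S := by
  rw [image_image]
  exact (image_congr fun p hp => cycShift_cycShift_of_add_eq hcd (hS hp)).trans image_id'

lemma forall_mod_succ_notMem_image_cycShift (hcd : c + d = n) (hS : S ⊆ Icc 1 n)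
    (h : ∀ x ∈ S, x % n + 1 ∉ S) :
    ∀ y ∈ S.image (cycShift n c), y % n + 1 ∉ S.image (cycShift n c) := by
  rintro _ hy hsucc
  obtain ⟨p, hp, rfl⟩ := mem_image.mp hy
  have hn : 0 < n := by have := mem_Icc.mp (hS hp); omega
  rw [← cycShift_one one_le_cycShift, cycShift_cycShift, add_comm, ← cycShift_cycShift,
    cycShift_mem_image_cycShift_iff hcd hS (cycShift_mem_Icc hn),
    cycShift_one (mem_Icc.mp (hS hp)).1] at hsucc
  exact h p hp hsucc

lemma card_filter_parity_image_cycShift (hn : Even n) (hc : Even c) (hcd : c + d = n)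
    (hS : S ⊆ Icc 1 n) :
    #{q ∈ S.image (cycShift n c) | Even q} = #{p ∈ S | Even p} ∧
      #{q ∈ S.image (cycShift n c) | ¬Even q} = #{p ∈ S | ¬Even p} := by
  have hinj := (injOn_cycShift hcd).mono (coe_subset.mpr hS)
  have hpar : ∀ p ∈ S, Even (cycShift n c p) ↔ Even p := fun p hp =>
    even_cycShift_iff hn hc (mem_Icc.mp (hS hp)).1
  rw [card_filter_image_of_injOn hinj, card_filter_image_of_injOn hinj,
    filter_congr hpar, filter_congr fun p hp => not_congr (hpar p hp)]
  exact ⟨rfl, rfl⟩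

lemma image_cycShift_mem_filter_notMem (hcd : c + d = n) {Q : Finset ℕ → Prop} [DecidablePred Q]
    (hQ : ∀ S ⊆ Icc 1 n, Q S → Q (S.image (cycShift n c))) {a b : ℕ} (ha : a ∈ Icc 1 n)
    (hb : b ∈ Icc 1 n) :
    ∀ S ∈ {S ∈ (Icc 1 n).powerset | Q S ∧ a ∉ S ∧ b ∉ S}, S.image (cycShift n c) ∈
      {S ∈ (Icc 1 n).powerset | Q S ∧ cycShift n c a ∉ S ∧ cycShift n c b ∉ S} := by
  have hn : 0 < n := by have := mem_Icc.mp ha; omega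
  intro S hS
  simp only [mem_filter, mem_powerset] at hS ⊢
  obtain ⟨hSn, hQS, haS, hbS⟩ := hS
  refine ⟨image_subset_iff.mpr fun _ _ => cycShift_mem_Icc hn, hQ S hSn hQS, ?_, ?_⟩
  · rwa [cycShift_mem_image_cycShift_iff hcd hSn ha]
  · rwa [cycShift_mem_image_cycShift_iff hcd hSn hb]

lemma card_filter_notMem_eq_of_cycShift (hcd : c + d = n) (Q : Finset ℕ → Prop)
    [DecidablePred Q] (hQc : ∀ S ⊆ Icc 1 n, Q S → Q (S.image (cycShift n c)))
    (hQd : ∀ S ⊆ Icc 1 n, Q S → Q (S.image (cycShift n d))) {a b : ℕ} (ha : a ∈ Icc 1 n)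
    (hb : b ∈ Icc 1 n) :
    #{S ∈ (Icc 1 n).powerset | Q S ∧ a ∉ S ∧ b ∉ S} =
      #{S ∈ (Icc 1 n).powerset | Q S ∧ cycShift n c a ∉ S ∧ cycShift n c b ∉ S} := by
  have hn : 0 < n := by have := mem_Icc.mp ha; omega
  have hback := image_cycShift_mem_filter_notMem ((add_comm d c).trans hcd) hQd
    (cycShift_mem_Icc hn) (cycShift_mem_Icc hn) (a := cycShift n c a) (b := cycShift n c b)
  rw [cycShift_cycShift_of_add_eq hcd ha, cycShift_cycShift_of_add_eq hcd hb] at hback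
  refine card_nbij' _ _ (image_cycShift_mem_filter_notMem hcd hQc ha hb) hback ?_ ?_
  · intro S hS
    exact image_image_cycShift_of_add_eq hcd (mem_powerset.mp (mem_filter.mp hS).1)
  · intro S hS
    exact image_image_cycShift_of_add_eq ((add_comm d c).trans hcd)
      (mem_powerset.mp (mem_filter.mp hS).1)

end rotation

lemma card_filter_odd_Icc (k : ℕ) : #{x ∈ Icc 1 (2 * k) | Odd x} = k := by
  have : {x ∈ Icc 1 (2 * k) | Odd x} = (range k).image (fun t => 2 * t + 1) := by
    ext x
    simp only [mem_filter, mem_Icc, mem_image, mem_range, Nat.odd_iff]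
    constructor
    · rintro ⟨_, _⟩
      exact ⟨x / 2, by omega, by omega⟩
    · rintro ⟨t, _, rfl⟩
      omega
  rw [this, card_image_of_injective _ fun a b h => by simpa using h, card_range]

lemma succ_notMem_of_forall_mod_succ_notMem {n : ℕ} {S : Finset ℕ} (hS : S ⊆ Icc 1 n)
    (h : ∀ x ∈ S, x % n + 1 ∉ S) : ∀ x ∈ S, x + 1 ∉ S := by
  intro x hx hx1
  have := mem_Icc.mp (hS hx1)
  exact h x hx (by rwa [Nat.mod_eq_of_lt (by omega)])

lemma card_filter_odd_notMem_add_card {k : ℕ} {S : Finset ℕ} (hS : S ⊆ Icc 1 (2 * k))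
    (h : ∀ x ∈ S, x % (2 * k) + 1 ∉ S) :
    #{x ∈ {x ∈ Icc 1 (2 * k) | Odd x} | x ∉ S ∧ x + 1 ∉ S} + #S = k := by
  have hsucc := succ_notMem_of_forall_mod_succ_notMem hS h
  -- `2 * ((s - 1) / 2) + 1` is the odd element of the block `{2m+1, 2m+2}` containing `s`
  have hblocks : {x ∈ {x ∈ Icc 1 (2 * k) | Odd x} | ¬(x ∉ S ∧ x + 1 ∉ S)} =
      S.image fun s => 2 * ((s - 1) / 2) + 1 := by
    ext x
    simp only [mem_filter, mem_Icc, mem_image, Nat.odd_iff]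
    constructor
    · rintro ⟨⟨_, hx⟩, hxS⟩
      by_cases hx0 : x ∈ S
      · exact ⟨x, hx0, by omega⟩
      · exact ⟨x + 1, by tauto, by omega⟩
    · rintro ⟨s, hs, rfl⟩
      have := mem_Icc.mp (hS hs)
      rcases (by omega : s = 2 * ((s - 1) / 2) + 1 ∨ s = 2 * ((s - 1) / 2) + 1 + 1) with hs' | hs'
      · exact ⟨⟨by omega, by omega⟩, fun h' => h'.1 (hs' ▸ hs)⟩
      · exact ⟨⟨by omega, by omega⟩, fun h' => h'.2 (hs' ▸ hs)⟩
  have hinj : Set.InjOn (fun s => 2 * ((s - 1) / 2) + 1) S := by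
    intro a ha b hb hab
    simp only at hab
    have := mem_Icc.mp (hS ha)
    have := mem_Icc.mp (hS hb)
    rcases (by omega : a = b ∨ b = a + 1 ∨ a = b + 1) with h' | h' | h'
    · exact h'
    · exact absurd (h' ▸ hb) (hsucc a ha)
    · exact absurd (h' ▸ ha) (hsucc b hb)
  have hsplit := card_filter_add_card_filter_not (s := {x ∈ Icc 1 (2 * k) | Odd x})
    fun x => x ∉ S ∧ x + 1 ∉ S
  rwa [hblocks, card_image_of_injOn hinj, card_filter_odd_Icc] at hsplit

lemma filter_powerset_Icc_notMem_top {n : ℕ} (P : Finset ℕ → Prop) [DecidablePred P] :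
    {S ∈ (Icc 1 n).powerset | ((∀ x ∈ S, x % n + 1 ∉ S) ∧ P S) ∧ n - 1 ∉ S ∧ n ∉ S} =
      {S ∈ (Icc 1 (n - 2)).powerset | (∀ x ∈ S, x + 1 ∉ S) ∧ P S} := by
  ext S
  simp only [mem_filter, mem_powerset]
  have hsub : S ⊆ Icc 1 (n - 2) ↔ S ⊆ Icc 1 n ∧ n - 1 ∉ S ∧ n ∉ S := by
    constructor
    · intro h
      have hS : ∀ x ∈ S, 1 ≤ x ∧ x ≤ n - 2 := fun x hx => mem_Icc.mp (h hx)
      exact ⟨fun x hx => mem_Icc.mpr (by have := hS x hx; omega),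
        fun h1 => by have := hS _ h1; omega, fun h2 => by have := hS _ h2; omega⟩
    · rintro ⟨h, h1, h2⟩ x hx
      have := mem_Icc.mp (h hx)
      have := ne_of_mem_of_not_mem hx h1
      have := ne_of_mem_of_not_mem hx h2
      exact mem_Icc.mpr (by omega)
  have hindep (h : S ⊆ Icc 1 (n - 2)) :
      (∀ x ∈ S, x % n + 1 ∉ S) ↔ ∀ x ∈ S, x + 1 ∉ S :=
    forall₂_congr fun x hx => by
      have := mem_Icc.mp (h hx)
      rw [Nat.mod_eq_of_lt (by omega)]
  rw [hsub]
  constructor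
  · rintro ⟨hS, ⟨hind, hP⟩, hS'⟩
    exact ⟨⟨hS, hS'⟩, (hindep (hsub.mpr ⟨hS, hS'⟩)).mp hind, hP⟩
  · rintro ⟨hS, hind, hP⟩
    exact ⟨hS.1, ⟨(hindep (hsub.mpr hS)).mpr hind, hP⟩, hS.2⟩

section doubleCounting

variable {k : ℕ} {P : Finset ℕ → Prop} [DecidablePred P]

lemma card_filter_circular_notMem_block
    (hP : ∀ c ≤ 2 * k, Even c → ∀ S ⊆ Icc 1 (2 * k), P S → P (S.image (cycShift (2 * k) c)))
    {x : ℕ} (hx : x ∈ Icc 1 (2 * k)) (hxodd : Odd x) :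
    #{S ∈ (Icc 1 (2 * k)).powerset |
        ((∀ y ∈ S, y % (2 * k) + 1 ∉ S) ∧ P S) ∧ x ∉ S ∧ x + 1 ∉ S} =
      #{S ∈ (Icc 1 (2 * k - 2)).powerset | (∀ y ∈ S, y + 1 ∉ S) ∧ P S} := by
  rw [mem_Icc] at hx
  rw [Nat.odd_iff] at hxodd
  have hQ (c : ℕ) (hc : c ≤ 2 * k) (hce : c % 2 = 0) (S : Finset ℕ) (hS : S ⊆ Icc 1 (2 * k))
      (hQS : (∀ y ∈ S, y % (2 * k) + 1 ∉ S) ∧ P S) :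
      (∀ y ∈ S.image (cycShift (2 * k) c),
          y % (2 * k) + 1 ∉ S.image (cycShift (2 * k) c)) ∧
        P (S.image (cycShift (2 * k) c)) :=
    ⟨forall_mod_succ_notMem_image_cycShift (Nat.add_sub_cancel' hc) hS hQS.1,
      hP c hc (Nat.even_iff.mpr hce) S hS hQS.2⟩
  have hx1 : cycShift (2 * k) (2 * k - (x + 1)) x = 2 * k - 1 := by
    rw [cycShift_of_add_le (by omega) (by omega)]
    omega
  have hx2 : cycShift (2 * k) (2 * k - (x + 1)) (x + 1) = 2 * k := by
    rw [cycShift_of_add_le (by omega) (by omega)]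
    omega
  rw [card_filter_notMem_eq_of_cycShift (c := 2 * k - (x + 1)) (d := x + 1) (by omega) _
      (hQ _ (by omega) (by omega)) (hQ _ (by omega) (by omega))
      (mem_Icc.mpr ⟨by omega, by omega⟩) (mem_Icc.mpr ⟨by omega, by omega⟩), hx1, hx2,
    filter_powerset_Icc_notMem_top]

theorem mul_card_circular_eq_mul_card_linear {m : ℕ}
    (hP : ∀ c ≤ 2 * k, Even c → ∀ S ⊆ Icc 1 (2 * k), P S → P (S.image (cycShift (2 * k) c)))
    (hcard : ∀ S ⊆ Icc 1 (2 * k), P S → #S + m = k) :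
    m * #{S ∈ (Icc 1 (2 * k)).powerset | (∀ x ∈ S, x % (2 * k) + 1 ∉ S) ∧ P S} =
      k * #{S ∈ (Icc 1 (2 * k - 2)).powerset | (∀ x ∈ S, x + 1 ∉ S) ∧ P S} := by
  have hfree : ∀ S ∈ {S ∈ (Icc 1 (2 * k)).powerset | (∀ x ∈ S, x % (2 * k) + 1 ∉ S) ∧ P S},
      #{x ∈ {x ∈ Icc 1 (2 * k) | Odd x} | x ∉ S ∧ x + 1 ∉ S} = m := by
    intro S hS
    rw [mem_filter, mem_powerset] at hS
    have := card_filter_odd_notMem_add_card hS.1 hS.2.1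
    have := hcard S hS.1 hS.2.2
    omega
  have hblock : ∀ x ∈ {x ∈ Icc 1 (2 * k) | Odd x},
      #{S ∈ {S ∈ (Icc 1 (2 * k)).powerset | (∀ x ∈ S, x % (2 * k) + 1 ∉ S) ∧ P S} |
          x ∉ S ∧ x + 1 ∉ S} =
        #{S ∈ (Icc 1 (2 * k - 2)).powerset | (∀ x ∈ S, x + 1 ∉ S) ∧ P S} := by
    intro x hx
    rw [mem_filter] at hx
    rw [filter_filter]
    exact card_filter_circular_notMem_block hP hx.1 hx.2
  rw [mul_comm, card_mul_eq_card_mul _ hfree hblock, card_filter_odd_Icc]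

end doubleCounting

theorem circular_linear_count_relation_general (k i j : ℕ) :
    i * ((Finset.Icc 1 (2 * k)).powerset.filter (fun S =>
          (∀ x ∈ S, (x % (2 * k) + 1) ∉ S) ∧
          ((S.filter (fun x => ¬ Even x)).card : ℤ) = (k : ℤ) - i - j ∧
          (S.filter (fun x => Even x)).card = j)).card =
    k * ((Finset.Icc 1 (2 * k - 2)).powerset.filter (fun S =>
          (∀ x ∈ S, x + 1 ∉ S) ∧
          ((S.filter (fun x => ¬ Even x)).card : ℤ) = (k : ℤ) - i - j ∧
          (S.filter (fun x => Even x)).card = j)).card := by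
  refine mul_card_circular_eq_mul_card_linear
    (P := fun S => (#{x ∈ S | ¬Even x} : ℤ) = k - i - j ∧ #{x ∈ S | Even x} = j) ?_ ?_
  · rintro c hc hce S hS ⟨hodd, heven⟩
    obtain ⟨he, ho⟩ := card_filter_parity_image_cycShift (even_two_mul k) hce
      (Nat.add_sub_cancel' hc) hS
    exact ⟨ho ▸ hodd, he ▸ heven⟩
  · rintro S - ⟨hodd, heven⟩
    have := card_filter_add_card_filter_not (s := S) (fun x => Even x)
    omega

theorem circular_linear_count_relation (k i j : ℕ) (hi : 1 ≤ i) (hik : i ≤ k) (hj : j ≤ i) :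
    i * ((Finset.Icc 1 (2 * k)).powerset.filter (fun S =>
          (∀ x ∈ S, (x % (2 * k) + 1) ∉ S) ∧
          ((S.filter (fun x => ¬ Even x)).card : ℤ) = (k : ℤ) - i - j ∧
          (S.filter (fun x => Even x)).card = j)).card =
    k * ((Finset.Icc 1 (2 * k - 2)).powerset.filter (fun S =>
          (∀ x ∈ S, x + 1 ∉ S) ∧
          ((S.filter (fun x => ¬ Even x)).card : ℤ) = (k : ℤ) - i - j ∧
          (S.filter (fun x => Even x)).card = j)).card :=
  circular_linear_count_relation_general k i j
end
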